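/- arXiv:1603.07153 — 2 statements merged into one kernel-verified Lean document; each statement's English description precedes it below -/
import Mathlib

section
/- Let w : ℝ² → ℝ be a nonzero harmonic polynomial that is homogeneous of degree k ≥ 2. Then the Hessian determinant w_{xx} w_{yy} - w_{xy}² is strictly negative at every point of ℝ² ∖ {(0,0)}. -/
open Real

/-- Partial derivative in the first variable. -/
noncomputable def pdx (w : ℝ → ℝ → ℝ) (x y : ℝ) : ℝ := deriv (fun x' => w x' y) x

/-- Partial derivative in the second variable. -/
noncomputable def pdy (w : ℝ → ℝ → ℝ) (x y : ℝ) : ℝ := deriv (fun y' => w x y') y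

/-- `w` is (the function of) a real polynomial in two variables. -/
def IsPoly2 (w : ℝ → ℝ → ℝ) : Prop :=
  ∃ p : MvPolynomial (Fin 2) ℝ, ∀ x y : ℝ, w x y = MvPolynomial.eval ![x, y] p

/-- `w` is homogeneous of degree `k` as a function. -/
def Homog (w : ℝ → ℝ → ℝ) (k : ℕ) : Prop :=
  ∀ l x y : ℝ, w (l * x) (l * y) = l ^ k * w x y

/-!
By harmonicity `w_yy = -w_xx`, so the Hessian determinant is `-(w_xx² + w_xy²)`, and it suffices
to show that `w_xx` and `w_xy` vanish together at a point `z₀ ≠ 0` only if `w = 0`.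
The partials of a harmonic `w` homogeneous of degree `k` are harmonic and homogeneous of degree
`k - 1`, so Euler's identity `x w_x + y w_y = k w` applied to `w_x` and `w_y` gives at `z₀`
`x₀ w_xx + y₀ w_xy = (k - 1) w_x` and `x₀ w_xy - y₀ w_xx = (k - 1) w_y`. This system has
determinant `-(x₀² + y₀²) ≠ 0`, so for `k ≥ 2` the gradient of `w` vanishes at `z₀` exactly when
those of `w_x` and `w_y` do. Descending in degree to the constant partials of a linear function
gives `w_x = w_y = 0` everywhere, hence `w = 0` by Euler's identity.
-/

open Function
open scoped ContDiff

section Homogeneous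

variable {E F : Type*} [NormedAddCommGroup E] [NormedSpace ℝ E]
  [NormedAddCommGroup F] [NormedSpace ℝ F] {f : E → F} {k : ℕ}

theorem fderiv_apply_self_of_homogeneous (hf : Differentiable ℝ f)
    (hhom : ∀ (l : ℝ) z, f (l • z) = l ^ k • f z) (z : E) :
    fderiv ℝ f z z = (k : ℝ) • f z := by
  have hline : HasDerivAt (fun l : ℝ => l • z) z 1 := by
    simpa using (hasDerivAt_id (1 : ℝ)).smul_const z
  have h1 : HasDerivAt (fun l : ℝ => f (l • z)) (fderiv ℝ f z z) 1 :=
    (hf z).hasFDerivAt.comp_hasDerivAt_of_eq 1 hline (one_smul ℝ z).symm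
  have h2 : HasDerivAt (fun l : ℝ => l ^ k • f z) ((k : ℝ) • f z) 1 := by
    simpa using (hasDerivAt_pow k (1 : ℝ)).smul_const (f z)
  simp only [hhom] at h1
  exact h1.unique h2

theorem fderiv_smul_of_homogeneous (hf : Differentiable ℝ f)
    (hhom : ∀ (l : ℝ) z, f (l • z) = l ^ (k + 1) • f z) {l : ℝ} (hl : l ≠ 0) (z : E) :
    fderiv ℝ f (l • z) = l ^ k • fderiv ℝ f z := by
  have h1 : HasFDerivAt (fun z => f (l • z))
      ((fderiv ℝ f (l • z)).comp (l • ContinuousLinearMap.id ℝ E)) z :=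
    (hf _).hasFDerivAt.comp z ((hasFDerivAt_id z).const_smul l)
  have h2 : HasFDerivAt (fun z => l ^ (k + 1) • f z) (l ^ (k + 1) • fderiv ℝ f z) z :=
    (hf z).hasFDerivAt.const_smul _
  simp only [hhom] at h1
  ext v
  apply smul_right_injective F hl
  simpa [pow_succ, mul_smul, smul_comm l] using congrArg (· v) (h1.unique h2)

end Homogeneous

theorem MvPolynomial.contDiff_eval {σ 𝕜 : Type*} [Fintype σ] [NontriviallyNormedField 𝕜]
    {n : WithTop ℕ∞} (p : MvPolynomial σ 𝕜) : ContDiff 𝕜 n fun x : σ → 𝕜 => eval x p := by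
  induction p using MvPolynomial.induction_on with
  | C a => simpa using contDiff_const
  | add p q hp hq => simpa using hp.add hq
  | mul_X p i hp => simpa using hp.mul (contDiff_apply 𝕜 𝕜 i)

def IsHarmonic2 (w : ℝ → ℝ → ℝ) : Prop :=
  ∀ x y, pdx (pdx w) x y + pdy (pdy w) x y = 0

section Plane

variable {w : ℝ → ℝ → ℝ} {k : ℕ}

theorem IsPoly2.contDiff {n : WithTop ℕ∞} (h : IsPoly2 w) : ContDiff ℝ n (uncurry w) := by
  obtain ⟨p, hp⟩ := h
  have hvec : ContDiff ℝ n fun z : ℝ × ℝ => ![z.1, z.2] := by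
    refine contDiff_pi.2 fun i => ?_
    fin_cases i <;> simp <;> fun_prop
  have hw : uncurry w = fun z : ℝ × ℝ => MvPolynomial.eval ![z.1, z.2] p :=
    funext fun z => hp z.1 z.2
  rw [hw]
  exact p.contDiff_eval.comp hvec

theorem homog_iff_smul :
    Homog w k ↔ ∀ (l : ℝ) (z : ℝ × ℝ), uncurry w (l • z) = l ^ k • uncurry w z := by
  simp [Homog, Prod.forall]

/-- `Homog` also constrains the scaling factor `l = 0`; continuity supplies that case. -/
theorem homog_of_forall_ne_zero (hc : Continuous (uncurry w))
    (h : ∀ l ≠ 0, ∀ x y, w (l * x) (l * y) = l ^ k * w x y) : Homog w k := by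
  intro l x y
  refine congrFun (Continuous.ext_on (dense_compl_singleton 0)
    (f := fun l => w (l * x) (l * y)) (hc.comp (f := fun l : ℝ => (l * x, l * y)) (by fun_prop))
    (by fun_prop) fun l hl => h l hl x y) l

theorem Homog.eq_of_degree_zero (h : Homog w 0) (x y x' y' : ℝ) : w x y = w x' y' := by
  have h₁ := h 0 x y
  have h₂ := h 0 x' y'
  simp only [zero_mul, pow_zero, one_mul] at h₁ h₂
  rw [← h₁, ← h₂]

theorem pdx_eq_fderiv {x y : ℝ} (h : DifferentiableAt ℝ (uncurry w) (x, y)) :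
    pdx w x y = fderiv ℝ (uncurry w) (x, y) (1, 0) := by
  have := h.hasFDerivAt.comp_hasDerivAt x ((hasDerivAt_id x).prodMk (hasDerivAt_const x y))
  exact this.deriv

theorem pdy_eq_fderiv {x y : ℝ} (h : DifferentiableAt ℝ (uncurry w) (x, y)) :
    pdy w x y = fderiv ℝ (uncurry w) (x, y) (0, 1) := by
  have := h.hasFDerivAt.comp_hasDerivAt y ((hasDerivAt_const y x).prodMk (hasDerivAt_id y))
  exact this.deriv

theorem uncurry_pdx_eq_fderiv (h : Differentiable ℝ (uncurry w)) :
    uncurry (pdx w) = fun z => fderiv ℝ (uncurry w) z (1, 0) :=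
  funext fun z => pdx_eq_fderiv (h z)

theorem uncurry_pdy_eq_fderiv (h : Differentiable ℝ (uncurry w)) :
    uncurry (pdy w) = fun z => fderiv ℝ (uncurry w) z (0, 1) :=
  funext fun z => pdy_eq_fderiv (h z)

theorem pdx_neg (u : ℝ → ℝ → ℝ) : pdx (fun x y => -u x y) = fun x y => -pdx u x y :=
  funext₂ fun _ _ => deriv.fun_neg

theorem pdy_neg (u : ℝ → ℝ → ℝ) : pdy (fun x y => -u x y) = fun x y => -pdy u x y :=
  funext₂ fun _ _ => deriv.fun_neg

theorem ContDiff.uncurry_pdx {m n : WithTop ℕ∞} (hw : ContDiff ℝ n (uncurry w))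
    (hmn : m + 1 ≤ n) : ContDiff ℝ m (uncurry (pdx w)) := by
  rw [uncurry_pdx_eq_fderiv (hw.differentiable (by rintro rfl; simp at hmn))]
  exact (hw.fderiv_right hmn).clm_apply contDiff_const

theorem ContDiff.uncurry_pdy {m n : WithTop ℕ∞} (hw : ContDiff ℝ n (uncurry w))
    (hmn : m + 1 ≤ n) : ContDiff ℝ m (uncurry (pdy w)) := by
  rw [uncurry_pdy_eq_fderiv (hw.differentiable (by rintro rfl; simp at hmn))]
  exact (hw.fderiv_right hmn).clm_apply contDiff_const

theorem ContDiff.differentiable_uncurry_pdx (hw : ContDiff ℝ 2 (uncurry w)) :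
    Differentiable ℝ (uncurry (pdx w)) :=
  (hw.uncurry_pdx (m := 1) (by norm_num)).differentiable one_ne_zero

theorem ContDiff.differentiable_uncurry_pdy (hw : ContDiff ℝ 2 (uncurry w)) :
    Differentiable ℝ (uncurry (pdy w)) :=
  (hw.uncurry_pdy (m := 1) (by norm_num)).differentiable one_ne_zero

theorem pdy_pdx_eq_pdx_pdy (hw : ContDiff ℝ 2 (uncurry w)) : pdy (pdx w) = pdx (pdy w) := by
  have hd : Differentiable ℝ (uncurry w) := hw.differentiable two_ne_zero
  have hdd : Differentiable ℝ (fderiv ℝ (uncurry w)) :=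
    (hw.fderiv_right (m := 1) (by norm_num)).differentiable one_ne_zero
  funext x y
  rw [pdy_eq_fderiv (hw.differentiable_uncurry_pdx _),
    pdx_eq_fderiv (hw.differentiable_uncurry_pdy _),
    uncurry_pdx_eq_fderiv hd, uncurry_pdy_eq_fderiv hd,
    fderiv_clm_apply (hdd _) (differentiableAt_const _),
    fderiv_clm_apply (hdd _) (differentiableAt_const _)]
  simpa using hw.contDiffAt.isSymmSndFDerivAt (by simp) (0, 1) (1, 0)

theorem Homog.euler (hd : Differentiable ℝ (uncurry w)) (h : Homog w k) (x y : ℝ) :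
    x * pdx w x y + y * pdy w x y = k * w x y := by
  rw [pdx_eq_fderiv (hd _), pdy_eq_fderiv (hd _)]
  calc x * fderiv ℝ (uncurry w) (x, y) (1, 0) + y * fderiv ℝ (uncurry w) (x, y) (0, 1)
      = fderiv ℝ (uncurry w) (x, y) (x • (1, 0) + y • (0, 1)) := by
        simp only [map_add, map_smul, smul_eq_mul]
    _ = k * w x y := by
        simpa using fderiv_apply_self_of_homogeneous hd (homog_iff_smul.1 h) (x, y)

theorem Homog.eq_zero_of_pdx_pdy_eq_zero (hd : Differentiable ℝ (uncurry w)) (h : Homog w k)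
    (hk : k ≠ 0) {x y : ℝ} (hx : pdx w x y = 0) (hy : pdy w x y = 0) : w x y = 0 := by
  have := h.euler hd x y
  rw [hx, hy] at this
  simpa [hk] using this.symm

theorem Homog.pdx (hw : ContDiff ℝ 1 (uncurry w)) (h : Homog w (k + 1)) : Homog (pdx w) k := by
  have hd : Differentiable ℝ (uncurry w) := hw.differentiable one_ne_zero
  refine homog_of_forall_ne_zero ?_ fun l hl x y => ?_
  · rw [uncurry_pdx_eq_fderiv hd]
    exact (hw.continuous_fderiv one_ne_zero).clm_apply continuous_const
  · rw [pdx_eq_fderiv (hd _), pdx_eq_fderiv (hd _)]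
    simpa using congrArg (· (1, 0)) (fderiv_smul_of_homogeneous hd (homog_iff_smul.1 h) hl (x, y))

theorem Homog.pdy (hw : ContDiff ℝ 1 (uncurry w)) (h : Homog w (k + 1)) : Homog (pdy w) k := by
  have hd : Differentiable ℝ (uncurry w) := hw.differentiable one_ne_zero
  refine homog_of_forall_ne_zero ?_ fun l hl x y => ?_
  · rw [uncurry_pdy_eq_fderiv hd]
    exact (hw.continuous_fderiv one_ne_zero).clm_apply continuous_const
  · rw [pdy_eq_fderiv (hd _), pdy_eq_fderiv (hd _)]
    simpa using congrArg (· (0, 1)) (fderiv_smul_of_homogeneous hd (homog_iff_smul.1 h) hl (x, y))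

theorem isHarmonic2_pdx (hw : ContDiff ℝ 3 (uncurry w)) (h : IsHarmonic2 w) :
    IsHarmonic2 (pdx w) := by
  have hyy : pdy (pdy w) = fun x y => -pdx (pdx w) x y :=
    funext₂ fun x y => eq_neg_of_add_eq_zero_right (h x y)
  intro x y
  rw [pdy_pdx_eq_pdx_pdy (hw.of_le (by norm_num)),
    pdy_pdx_eq_pdx_pdy (hw.uncurry_pdy (by norm_num)), hyy, pdx_neg, add_neg_cancel]

theorem isHarmonic2_pdy (hw : ContDiff ℝ 3 (uncurry w)) (h : IsHarmonic2 w) :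
    IsHarmonic2 (pdy w) := by
  have hxx : pdx (pdx w) = fun x y => -pdy (pdy w) x y :=
    funext₂ fun x y => eq_neg_of_add_eq_zero_left (h x y)
  intro x y
  rw [← pdy_pdx_eq_pdx_pdy (hw.of_le (by norm_num)),
    ← pdy_pdx_eq_pdx_pdy (hw.uncurry_pdx (by norm_num)), hxx, pdy_neg, neg_add_cancel]

theorem IsHarmonic2.grad_pdy_eq_zero_of_grad_pdx_eq_zero (hw : ContDiff ℝ 2 (uncurry w))
    (hharm : IsHarmonic2 w) {x y : ℝ} (hxx : pdx (pdx w) x y = 0) (hyx : pdy (pdx w) x y = 0) :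
    pdx (pdy w) x y = 0 ∧ pdy (pdy w) x y = 0 := by
  rw [← pdy_pdx_eq_pdx_pdy hw, eq_neg_of_add_eq_zero_right (hharm x y), hxx, neg_zero]
  exact ⟨hyx, rfl⟩

theorem IsHarmonic2.grad_eq_zero_of_grad_pdx_eq_zero (hw : ContDiff ℝ 2 (uncurry w))
    (hharm : IsHarmonic2 w) (hk : Homog w (k + 2)) {x y : ℝ} (hxx : pdx (pdx w) x y = 0)
    (hyx : pdy (pdx w) x y = 0) : pdx w x y = 0 ∧ pdy w x y = 0 := by
  have hw1 : ContDiff ℝ 1 (uncurry w) := hw.of_le (by norm_num)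
  obtain ⟨hxy, hyy⟩ := hharm.grad_pdy_eq_zero_of_grad_pdx_eq_zero hw hxx hyx
  exact ⟨(hk.pdx hw1).eq_zero_of_pdx_pdy_eq_zero hw.differentiable_uncurry_pdx k.succ_ne_zero
      hxx hyx,
    (hk.pdy hw1).eq_zero_of_pdx_pdy_eq_zero hw.differentiable_uncurry_pdy k.succ_ne_zero
      hxy hyy⟩

theorem IsHarmonic2.grad_pdx_eq_zero_of_grad_eq_zero (hw : ContDiff ℝ 2 (uncurry w))
    (hharm : IsHarmonic2 w) (hk : Homog w (k + 2)) {x₀ y₀ : ℝ} (h₀ : (x₀, y₀) ≠ (0, 0))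
    (hx : pdx w x₀ y₀ = 0) (hy : pdy w x₀ y₀ = 0) :
    pdx (pdx w) x₀ y₀ = 0 ∧ pdy (pdx w) x₀ y₀ = 0 := by
  have hw1 : ContDiff ℝ 1 (uncurry w) := hw.of_le (by norm_num)
  have hex := (hk.pdx hw1).euler hw.differentiable_uncurry_pdx x₀ y₀
  have hey := (hk.pdy hw1).euler hw.differentiable_uncurry_pdy x₀ y₀
  rw [hx, mul_zero] at hex
  rw [hy, mul_zero, ← pdy_pdx_eq_pdx_pdy hw, eq_neg_of_add_eq_zero_right (hharm x₀ y₀)] at hey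
  have hr : x₀ * x₀ + y₀ * y₀ ≠ 0 := by
    rwa [Ne, mul_self_add_mul_self_eq_zero, ← Prod.mk.injEq]
  constructor
  · refine (mul_eq_zero.1 ?_).resolve_left hr
    linear_combination x₀ * hex - y₀ * hey
  · refine (mul_eq_zero.1 ?_).resolve_left hr
    linear_combination y₀ * hex + x₀ * hey

theorem IsHarmonic2.eq_zero_of_grad_eq_zero {n : ℕ} (hw : ContDiff ℝ ∞ (uncurry w))
    (hharm : IsHarmonic2 w) (hk : Homog w (n + 1)) {x₀ y₀ : ℝ} (h₀ : (x₀, y₀) ≠ (0, 0))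
    (hx : pdx w x₀ y₀ = 0) (hy : pdy w x₀ y₀ = 0) (x y : ℝ) : w x y = 0 := by
  induction n generalizing w with
  | zero =>
    have hw1 : ContDiff ℝ 1 (uncurry w) := hw.of_le (by simp)
    refine hk.eq_zero_of_pdx_pdy_eq_zero (hw1.differentiable one_ne_zero) one_ne_zero ?_ ?_
    · rw [(hk.pdx hw1).eq_of_degree_zero x y x₀ y₀, hx]
    · rw [(hk.pdy hw1).eq_of_degree_zero x y x₀ y₀, hy]
  | succ n ih =>
    have hw1 : ContDiff ℝ 1 (uncurry w) := hw.of_le (by simp)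
    have hw2 : ContDiff ℝ 2 (uncurry w) := hw.of_le (WithTop.coe_le_coe.2 le_top)
    have hw3 : ContDiff ℝ 3 (uncurry w) := hw.of_le (WithTop.coe_le_coe.2 le_top)
    obtain ⟨hxx, hyx⟩ := hharm.grad_pdx_eq_zero_of_grad_eq_zero hw2 hk h₀ hx hy
    obtain ⟨hxy, hyy⟩ := hharm.grad_pdy_eq_zero_of_grad_pdx_eq_zero hw2 hxx hyx
    exact hk.eq_zero_of_pdx_pdy_eq_zero (hw1.differentiable one_ne_zero) n.succ.succ_ne_zero
      (ih (hw.uncurry_pdx (m := ∞) (by simp)) (isHarmonic2_pdx hw3 hharm) (hk.pdx hw1) hxx hyx)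
      (ih (hw.uncurry_pdy (m := ∞) (by simp)) (isHarmonic2_pdy hw3 hharm) (hk.pdy hw1) hxy hyy)

theorem stmt_1 (w : ℝ → ℝ → ℝ) (k : ℕ) (hk : 2 ≤ k)
    (hpoly : IsPoly2 w) (hhom : Homog w k)
    (hne : ∃ x y : ℝ, w x y ≠ 0)
    (hharm : ∀ x y : ℝ, pdx (pdx w) x y + pdy (pdy w) x y = 0) :
    ∀ x y : ℝ, (x, y) ≠ (0, 0) →
      pdx (pdx w) x y * pdy (pdy w) x y - (pdy (pdx w) x y) ^ 2 < 0 := by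
  obtain ⟨m, rfl⟩ : ∃ m, k = m + 2 := ⟨k - 2, by omega⟩
  intro x y h₀
  rw [eq_neg_of_add_eq_zero_right (hharm x y)]
  by_contra hdet
  have hxx : pdx (pdx w) x y = 0 := by nlinarith [sq_nonneg (pdy (pdx w) x y)]
  have hyx : pdy (pdx w) x y = 0 := by nlinarith [sq_nonneg (pdx (pdx w) x y)]
  obtain ⟨hx, hy⟩ :=
    IsHarmonic2.grad_eq_zero_of_grad_pdx_eq_zero hpoly.contDiff hharm hhom hxx hyx
  obtain ⟨x', y', hne⟩ := hne
  exact hne (IsHarmonic2.eq_zero_of_grad_eq_zero hpoly.contDiff hharm hhom h₀ hx hy x' y')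

end Plane
end

section
/- Let w : ℝ² → ℝ be a homogeneous polynomial of degree k ≥ 2 that has a repeated linear factor, i.e. w = ℓ² q with ℓ a nonzero linear form and q a homogeneous polynomial of degree k - 2. Then there is no ε > 0 such that w_{xx} w_{yy} - w_{xy}² ≤ -ε² (w_{xx} + w_{yy})² holds with strict negativity of the left side on all of ℝ² ∖ {(0,0)}; in fact the Hessian determinant of w vanishes at every nonzero point of the line ℓ = 0. -/
open Real

/-! On the line `ℓ = 0` every term of the second derivatives of `w = ℓ² q` that still carries a
factor `ℓ` vanishes, so there `Hess w = 2 q · ∇ℓ ∇ℓᵀ`, a rank-one matrix with determinant `0`.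
The line meets `ℝ² ∖ {0}` (at `(β, -α)`), which rules out strict negativity of the determinant. -/

open MvPolynomial

theorem MvPolynomial.hasDerivAt_eval_update {𝕜 σ : Type*} [NontriviallyNormedField 𝕜]
    [DecidableEq σ] (p : MvPolynomial σ 𝕜) (v : σ → 𝕜) (i : σ) (t : 𝕜) :
    HasDerivAt (fun s => eval (Function.update v i s) p)
      (eval (Function.update v i t) (pderiv i p)) t := by
  induction p using MvPolynomial.induction_on with
  | C a => simpa using hasDerivAt_const t a
  | add p q hp hq => simp only [map_add]; exact hp.add hq
  | mul_X p j hp =>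
    have hX : HasDerivAt (fun s => Function.update v i s j) (if j = i then 1 else 0) t := by
      by_cases hj : j = i
      · subst hj; simpa using hasDerivAt_id' t
      · simpa [Function.update_of_ne hj, hj] using hasDerivAt_const t (v j)
    simp only [map_mul, eval_X]
    refine (hp.mul hX).congr_deriv ?_
    simp only [Derivation.leibniz, pderiv_X, Pi.single_apply, smul_eq_mul, map_add, map_mul, eval_X]
    split_ifs <;> simp only [map_one, map_zero] <;> ring

theorem pdx_eq_eval_pderiv {w : ℝ → ℝ → ℝ} {p : MvPolynomial (Fin 2) ℝ}
    (hw : ∀ x y, w x y = eval ![x, y] p) (x y : ℝ) :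
    pdx w x y = eval ![x, y] (pderiv 0 p) := by
  have hupd : ∀ s, Function.update ![x, y] 0 s = ![s, y] := fun s => by
    ext k; fin_cases k <;> simp
  have h := hasDerivAt_eval_update p ![x, y] 0 x
  simp only [hupd] at h
  simp only [pdx, hw, h.deriv]

theorem pdy_eq_eval_pderiv {w : ℝ → ℝ → ℝ} {p : MvPolynomial (Fin 2) ℝ}
    (hw : ∀ x y, w x y = eval ![x, y] p) (x y : ℝ) :
    pdy w x y = eval ![x, y] (pderiv 1 p) := by
  have hupd : ∀ s, Function.update ![x, y] 1 s = ![x, s] := fun s => by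
    ext k; fin_cases k <;> simp
  have h := hasDerivAt_eval_update p ![x, y] 1 y
  simp only [hupd] at h
  simp only [pdy, hw, h.deriv]

theorem MvPolynomial.eval_pderiv_pderiv_sq_mul_of_eval_eq_zero {R σ : Type*} [CommRing R]
    (L p : MvPolynomial σ R) (i j : σ) {v : σ → R} (hL : eval v L = 0) :
    eval v (pderiv i (pderiv j (L ^ 2 * p))) =
      2 * eval v (pderiv i L) * eval v (pderiv j L) * eval v p := by
  simp only [pow_two, Derivation.leibniz, smul_eq_mul, map_add, map_mul, hL]
  ring

noncomputable def hessianDet (w : ℝ → ℝ → ℝ) (x y : ℝ) : ℝ :=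
  pdx (pdx w) x y * pdy (pdy w) x y - (pdy (pdx w) x y) ^ 2

theorem hessianDet_eq_zero_of_eval_eq_zero {w : ℝ → ℝ → ℝ} {L p : MvPolynomial (Fin 2) ℝ}
    (hw : ∀ x y, w x y = eval ![x, y] (L ^ 2 * p)) {x y : ℝ} (hL : eval ![x, y] L = 0) :
    hessianDet w x y = 0 := by
  have hwx := pdx_eq_eval_pderiv hw
  have hwy := pdy_eq_eval_pderiv hw
  simp only [hessianDet, pdx_eq_eval_pderiv hwx, pdy_eq_eval_pderiv hwy, pdy_eq_eval_pderiv hwx,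
    eval_pderiv_pderiv_sq_mul_of_eval_eq_zero _ _ _ _ hL]
  ring

theorem stmt_15_general (w q : ℝ → ℝ → ℝ)
    (α β : ℝ) (hl : (α, β) ≠ (0, 0))
    (hq : IsPoly2 q)
    (hw : ∀ x y : ℝ, w x y = (α * x + β * y) ^ 2 * q x y) :
    (∀ x y : ℝ, (x, y) ≠ (0, 0) → α * x + β * y = 0 →
      pdx (pdx w) x y * pdy (pdy w) x y - (pdy (pdx w) x y) ^ 2 = 0) ∧
    ¬ ∃ ε : ℝ, 0 < ε ∧ ∀ x y : ℝ, (x, y) ≠ (0, 0) →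
        pdx (pdx w) x y * pdy (pdy w) x y - (pdy (pdx w) x y) ^ 2 < 0 ∧
        pdx (pdx w) x y * pdy (pdy w) x y - (pdy (pdx w) x y) ^ 2 ≤
          -ε ^ 2 * (pdx (pdx w) x y + pdy (pdy w) x y) ^ 2 := by
  obtain ⟨p, hp⟩ := hq
  have hwP : ∀ x y, w x y = eval ![x, y] ((C α * X 0 + C β * X 1) ^ 2 * p) := fun x y => by
    simp [hw, hp]
  have hdet : ∀ x y, α * x + β * y = 0 → hessianDet w x y = 0 := fun x y h =>
    hessianDet_eq_zero_of_eval_eq_zero hwP (by simpa using h)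
  refine ⟨fun x y _ => hdet x y, ?_⟩
  rintro ⟨ε, -, hneg⟩
  have hne : (β, -α) ≠ (0, 0) := by simpa [and_comm] using hl
  exact (hneg β (-α) hne).1.ne (hdet β (-α) (by ring))

theorem stmt_15 (w q : ℝ → ℝ → ℝ) (k : ℕ) (hk : 2 ≤ k)
    (α β : ℝ) (hl : (α, β) ≠ (0, 0))
    (hq : IsPoly2 q) (hqhom : Homog q (k - 2))
    (hw : ∀ x y : ℝ, w x y = (α * x + β * y) ^ 2 * q x y) :
    (∀ x y : ℝ, (x, y) ≠ (0, 0) → α * x + β * y = 0 →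
      pdx (pdx w) x y * pdy (pdy w) x y - (pdy (pdx w) x y) ^ 2 = 0) ∧
    ¬ ∃ ε : ℝ, 0 < ε ∧ ∀ x y : ℝ, (x, y) ≠ (0, 0) →
        pdx (pdx w) x y * pdy (pdy w) x y - (pdy (pdx w) x y) ^ 2 < 0 ∧
        pdx (pdx w) x y * pdy (pdy w) x y - (pdy (pdx w) x y) ^ 2 ≤
          -ε ^ 2 * (pdx (pdx w) x y + pdy (pdy w) x y) ^ 2 :=
  stmt_15_general w q α β hl hq hw
end
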